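/- Let f : ℝⁿ → ℝⁿ be locally Lipschitz. Let A ⊆ ℝⁿ be open, bounded, containing 0, and suppose W : A → ℝ is C¹ with: W(0) = 0; 0 < W(x) < 1 for x ∈ A \ {0}; W(x) → 1 as x → ∂A; and ⟪∇W(x), f(x)⟫ = -Ψ(x)(1 - W(x)) on A for some continuous positive definite Ψ (Ψ(0) = 0 and Ψ(x) > 0 for x ≠ 0). Then for every x₀ ∈ A, the solution φ(t, x₀) stays in A for all t ≥ 0, i.e., A is forward invariant. -/

import Mathlib

open Filter Set Topology

/-!
Along a trajectory `φ` that stays in `A`, the identity `⟪∇W, f⟫ = -Ψ (1 - W) ≤ 0` makes `W ∘ φ`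
nonincreasing, so it stays below `W (φ 0) < 1`. If `φ` left `A`, then at the first exit time `T`
the point `φ T` would lie on `∂A`, and `W (φ s) → 1` as `s → T⁻`, which is impossible.
-/

theorem exists_first_exit {X : Type*} [TopologicalSpace X] {A : Set X} (hA : IsOpen A)
    {φ : ℝ → X} (hφ : Continuous φ) {t : ℝ} (ht : 0 ≤ t) (h0 : φ 0 ∈ A) (htA : φ t ∉ A) :
    ∃ T, 0 < T ∧ φ T ∈ frontier A ∧ MapsTo φ (Ico 0 T) A := by
  set S := Icc 0 t ∩ φ ⁻¹' Aᶜ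
  have hS : IsClosed S := isClosed_Icc.inter (hA.isClosed_compl.preimage hφ)
  have hSbdd : BddBelow S := ⟨0, fun s hs => hs.1.1⟩
  have hTS : sInf S ∈ S := hS.csInf_mem ⟨t, ⟨ht, le_rfl⟩, htA⟩ hSbdd
  set T := sInf S
  have hTpos : 0 < T := hTS.1.1.lt_of_ne fun h => hTS.2 (h ▸ h0)
  have hbefore : MapsTo φ (Ico 0 T) A := fun s hs => by
    by_contra hsA
    exact (csInf_le hSbdd ⟨⟨hs.1, hs.2.le.trans hTS.1.2⟩, hsA⟩).not_gt hs.2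
  have hclosure : φ T ∈ closure A := by
    refine map_mem_closure hφ ?_ hbefore
    rw [closure_Ico hTpos.ne]
    exact ⟨hTS.1.1, le_rfl⟩
  refine ⟨T, hTpos, ?_, hbefore⟩
  rw [frontier, hA.interior_eq]
  exact ⟨hclosure, hTS.2⟩

section Gradient

variable {E : Type*} [NormedAddCommGroup E] [InnerProductSpace ℝ E] [CompleteSpace E]

theorem HasGradientAt.comp_hasDerivAt {W : E → ℝ} {g : E} {φ : ℝ → E} {v : E} {s : ℝ}
    (hW : HasGradientAt W g (φ s)) (hφ : HasDerivAt φ v s) :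
    HasDerivAt (W ∘ φ) (inner ℝ g v) s := by
  simpa only [InnerProductSpace.toDual_apply_apply] using hW.hasFDerivAt.comp_hasDerivAt s hφ

theorem antitoneOn_comp_of_inner_gradient_nonpos {f : E → E} {W : E → ℝ} {A : Set E}
    (hA : IsOpen A) (hW : DifferentiableOn ℝ W A)
    (hWf : ∀ x ∈ A, inner ℝ (gradient W x) (f x) ≤ 0)
    {φ : ℝ → E} (hφ : ∀ t, HasDerivAt φ (f (φ t)) t) {I : Set ℝ} (hI : Convex ℝ I)
    (hφI : MapsTo φ I A) : AntitoneOn (W ∘ φ) I := by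
  have hderiv : ∀ s ∈ I, HasDerivAt (W ∘ φ) (inner ℝ (gradient W (φ s)) (f (φ s))) s :=
    fun s hs => ((hW.differentiableAt (hA.mem_nhds (hφI hs))).hasGradientAt).comp_hasDerivAt
      (hφ s)
  exact antitoneOn_of_hasDerivWithinAt_nonpos hI
    (fun s hs => (hderiv s hs).continuousAt.continuousWithinAt)
    (fun s hs => (hderiv s (interior_subset hs)).hasDerivWithinAt)
    (fun _ hs => hWf _ (hφI (interior_subset hs)))

end Gradient

theorem AntitoneOn.le_of_tendsto_nhdsLT {g : ℝ → ℝ} {a b l : ℝ} (hg : AntitoneOn g (Ico a b))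
    (hab : a < b) (hlim : Tendsto g (𝓝[<] b) (𝓝 l)) : l ≤ g a :=
  le_of_tendsto hlim <| mem_of_superset (Ioo_mem_nhdsLT hab) fun _ hs =>
    hg ⟨le_rfl, hab⟩ (Ioo_subset_Ico_self hs) hs.1.le

theorem stmt_15_general {n : ℕ} (f : EuclideanSpace ℝ (Fin n) → EuclideanSpace ℝ (Fin n))
    (A : Set (EuclideanSpace ℝ (Fin n))) (hAopen : IsOpen A)
    (W : EuclideanSpace ℝ (Fin n) → ℝ) (hW : ContDiffOn ℝ 1 W A)
    (hW0 : W 0 = 0)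
    (hWpos : ∀ x ∈ A, x ≠ 0 → 0 < W x ∧ W x < 1)
    (hWbdry : ∀ y ∈ frontier A, Filter.Tendsto W (nhdsWithin y A) (nhds 1))
    (Ψ : EuclideanSpace ℝ (Fin n) → ℝ)
    (hΨ0 : Ψ 0 = 0) (hΨpos : ∀ x, x ≠ 0 → 0 < Ψ x)
    (hpde : ∀ x ∈ A, (inner ℝ (gradient W x) (f x) : ℝ) = -Ψ x * (1 - W x)) :
    ∀ φ : ℝ → EuclideanSpace ℝ (Fin n), (∀ t, HasDerivAt φ (f (φ t)) t) →
      φ 0 ∈ A → ∀ t ≥ (0:ℝ), φ t ∈ A := by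
  intro φ hφ hφ0 t ht
  by_contra hout
  have hWlt : ∀ x ∈ A, W x < 1 := fun x hx => by
    rcases eq_or_ne x 0 with rfl | hx0
    · simp [hW0]
    · exact (hWpos x hx hx0).2
  have hΨnonneg : ∀ x, 0 ≤ Ψ x := fun x => by
    rcases eq_or_ne x 0 with rfl | hx0
    · exact hΨ0.ge
    · exact (hΨpos x hx0).le
  have hWf : ∀ x ∈ A, inner ℝ (gradient W x) (f x) ≤ 0 := fun x hx => by
    rw [hpde x hx, neg_mul]
    exact neg_nonpos.mpr (mul_nonneg (hΨnonneg x) (sub_nonneg.mpr (hWlt x hx).le))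
  have hφcont : Continuous φ := continuous_iff_continuousAt.mpr fun s => (hφ s).continuousAt
  obtain ⟨T, hT, hfrontier, hbefore⟩ := exists_first_exit hAopen hφcont ht hφ0 hout
  have hanti : AntitoneOn (W ∘ φ) (Ico 0 T) :=
    antitoneOn_comp_of_inner_gradient_nonpos hAopen (hW.differentiableOn one_ne_zero) hWf hφ
      (convex_Ico 0 T) hbefore
  have hφT : Tendsto φ (𝓝[<] T) (𝓝[A] φ T) :=
    tendsto_nhdsWithin_iff.mpr ⟨hφcont.continuousWithinAt.tendsto,
      mem_of_superset (Ioo_mem_nhdsLT hT) fun s hs => hbefore (Ioo_subset_Ico_self hs)⟩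
  exact (hanti.le_of_tendsto_nhdsLT hT ((hWbdry _ hfrontier).comp hφT)).not_gt (hWlt _ hφ0)

/-- Forward-invariance component of the Zubov theorem: if `W` is C¹ on the open bounded
neighborhood `A` of `0`, with `W 0 = 0`, `0 < W < 1` on `A \ {0}`, `W → 1` at `∂A`, and
`⟪∇W, f⟫ = -Ψ(1 - W)` on `A` for a continuous positive definite `Ψ`, then every solution
of `ẋ = f(x)` starting in `A` stays in `A` for all `t ≥ 0`. -/
theorem stmt_15 {n : ℕ} (f : EuclideanSpace ℝ (Fin n) → EuclideanSpace ℝ (Fin n))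
    (hf : LocallyLipschitz f)
    (A : Set (EuclideanSpace ℝ (Fin n))) (hAopen : IsOpen A)
    (hAbdd : Bornology.IsBounded A) (h0A : (0 : EuclideanSpace ℝ (Fin n)) ∈ A)
    (W : EuclideanSpace ℝ (Fin n) → ℝ) (hW : ContDiffOn ℝ 1 W A)
    (hW0 : W 0 = 0)
    (hWpos : ∀ x ∈ A, x ≠ 0 → 0 < W x ∧ W x < 1)
    (hWbdry : ∀ y ∈ frontier A, Filter.Tendsto W (nhdsWithin y A) (nhds 1))
    (Ψ : EuclideanSpace ℝ (Fin n) → ℝ) (hΨcont : Continuous Ψ)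
    (hΨ0 : Ψ 0 = 0) (hΨpos : ∀ x, x ≠ 0 → 0 < Ψ x)
    (hpde : ∀ x ∈ A, (inner ℝ (gradient W x) (f x) : ℝ) = -Ψ x * (1 - W x)) :
    ∀ φ : ℝ → EuclideanSpace ℝ (Fin n), (∀ t, HasDerivAt φ (f (φ t)) t) →
      φ 0 ∈ A → ∀ t ≥ (0:ℝ), φ t ∈ A :=
  stmt_15_general f A hAopen W hW hW0 hWpos hWbdry Ψ hΨ0 hΨpos hpde
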